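/- For all reals τ₁, τ₂ with 0 < τ₂ < τ₁ < 1 there exist a constant C > 0 and an integer M such that for all integers m ≥ M, ∫_{τ₂}^{τ₁} J_m(m r)² r dr ≥ (C/m) · J_m(m τ₁)². -/

import Mathlib

/-!
For integer order, `J_n(x) = (x/2)^n G_n(x²/4)` with an entire series `G_n` satisfying
`G_n' = -G_{n+1}`. A Sturm argument on the Bessel equation `(x J_n')' = (n²/x - x) J_n` shows that
`G_n(x²/4) > 0` for `0 ≤ x ≤ n`; hence `G_n(x²/4)` decreases on `[0, n]` and
`J_m(mr) ≥ (r/τ₁)^m J_m(mτ₁) ≥ 0` for `0 ≤ r ≤ τ₁ ≤ 1`. On the last stretch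
`[τ₁ - τ₁/(4m), τ₁]`, of length `τ₁/(4m)`, Bernoulli's inequality gives `(r/τ₁)^(2m) ≥ 1/2`, and
integrating there gives the bound with `C = τ₁τ₂/8`.
-/

open MeasureTheory Filter Set

/-- The Bessel function of the first kind of order `ν`:
`J_ν(x) = ∑ₖ (-1)^k / (k! Γ(ν+k+1)) (x/2)^(2k+ν)`. -/
noncomputable def besselJ (ν : ℝ) (x : ℝ) : ℝ :=
  ∑' k : ℕ, ((-1 : ℝ) ^ k / ((k.factorial : ℝ) * Real.Gamma (ν + (k : ℝ) + 1))) *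
    (x / 2) ^ (2 * (k : ℝ) + ν)

/-- The derivative `J_ν'` of the Bessel function. -/
noncomputable def besselJDeriv (ν : ℝ) (x : ℝ) : ℝ := deriv (besselJ ν) x

/-- `besselJZero ν s` is the `s`-th positive zero of `J_ν` (for `s ≥ 1`),
listed in increasing order. -/
noncomputable def besselJZero (ν : ℝ) : ℕ → ℝ
  | 0 => 0
  | s + 1 => sInf {x : ℝ | besselJZero ν s < x ∧ besselJ ν x = 0}

/-- `besselJPrimeZero ν s` is the `s`-th positive zero of `J_ν'` (for `s ≥ 1`),
listed in increasing order. -/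
noncomputable def besselJPrimeZero (ν : ℝ) : ℕ → ℝ
  | 0 => 0
  | s + 1 => sInf {x : ℝ | besselJPrimeZero ν s < x ∧ besselJDeriv ν x = 0}

open scoped Nat

noncomputable def besselCoeff (n k : ℕ) : ℝ := (-1) ^ k / (k ! * (n + k) !)

noncomputable def besselSeries (n : ℕ) (t : ℝ) : ℝ := ∑' k, besselCoeff n k * t ^ k

lemma abs_besselCoeff_mul_pow_le (n k : ℕ) (t : ℝ) : |besselCoeff n k * t ^ k| ≤ |t| ^ k / k ! := by
  have hk : (0 : ℝ) < k ! := by positivity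
  have hnk : (1 : ℝ) ≤ (n + k) ! := by exact_mod_cast (n + k).factorial_pos
  rw [besselCoeff, abs_mul, abs_div, abs_pow, abs_pow, abs_neg, abs_one, one_pow,
    abs_of_pos (by positivity), div_mul_eq_mul_div, one_mul]
  gcongr
  exact le_mul_of_one_le_right hk.le hnk

lemma summable_besselCoeff_mul_pow (n : ℕ) (t : ℝ) : Summable fun k => besselCoeff n k * t ^ k :=
  .of_norm_bounded (Real.summable_pow_div_factorial |t|) (abs_besselCoeff_mul_pow_le n · t)

lemma besselSeries_zero (n : ℕ) : besselSeries n 0 = 1 / n ! := by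
  rw [besselSeries, tsum_eq_single 0 fun k hk => by simp [zero_pow hk]]
  simp [besselCoeff]

lemma besselCoeff_succ_mul (n k : ℕ) :
    besselCoeff n (k + 1) * (k + 1) = -besselCoeff (n + 1) k := by
  simp only [besselCoeff, Nat.factorial_succ, show n + (k + 1) = n + 1 + k by omega]
  push_cast
  field_simp
  ring

lemma besselCoeff_recurrence (n k : ℕ) :
    (n + 1) * besselCoeff (n + 1) (k + 1) - besselCoeff n (k + 1) = besselCoeff (n + 2) k := by
  simp only [besselCoeff, show n + 1 + (k + 1) = n + k + 1 + 1 by omega,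
    show n + (k + 1) = n + k + 1 by omega, show n + 2 + k = n + k + 1 + 1 by omega,
    Nat.factorial_succ]
  push_cast
  field_simp
  ring

lemma hasDerivAt_besselSeries (n : ℕ) (t : ℝ) :
    HasDerivAt (besselSeries n) (-besselSeries (n + 1) t) t := by
  have hshift : besselSeries n =
      fun y => besselCoeff n 0 + ∑' k, besselCoeff n (k + 1) * y ^ (k + 1) :=
    funext fun y => (summable_besselCoeff_mul_pow n y).tsum_eq_zero_add.trans (by simp)
  set R := |t| + 1
  have hR : 0 < R := by positivity
  have hterm : ∀ (k : ℕ) (y : ℝ), HasDerivAt (fun y => besselCoeff n (k + 1) * y ^ (k + 1))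
      (-(besselCoeff (n + 1) k * y ^ k)) y := fun k y => by
    refine ((hasDerivAt_pow (k + 1) y).const_mul (besselCoeff n (k + 1))).congr_deriv ?_
    rw [← neg_mul, ← besselCoeff_succ_mul]
    push_cast
    ring
  have hseries := hasDerivAt_tsum_of_isPreconnected (Real.summable_pow_div_factorial R) isOpen_Ioo
    (convex_Ioo (-R) R).isPreconnected (fun k y _ => hterm k y)
    (fun k y hy => by
      rw [norm_neg, Real.norm_eq_abs]
      refine (abs_besselCoeff_mul_pow_le _ _ _).trans ?_
      gcongr
      exact abs_le.2 ⟨hy.1.le, hy.2.le⟩)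
    (y₀ := 0) ⟨by linarith, hR⟩ (by simp)
    (y := t) ⟨by linarith [neg_abs_le t], by linarith [le_abs_self t]⟩
  rw [tsum_neg] at hseries
  rw [hshift]
  exact hseries.const_add (besselCoeff n 0)

lemma besselSeries_recurrence (n : ℕ) (t : ℝ) :
    (n + 1) * besselSeries (n + 1) t - besselSeries n t = t * besselSeries (n + 2) t := by
  have hA := (summable_besselCoeff_mul_pow (n + 1) t).mul_left ((n : ℝ) + 1)
  have hB := summable_besselCoeff_mul_pow n t
  rw [besselSeries, besselSeries, ← tsum_mul_left, ← hA.tsum_sub hB, (hA.sub hB).tsum_eq_zero_add,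
    besselSeries, ← tsum_mul_left]
  have h0 : besselCoeff n 0 = (n + 1) * besselCoeff (n + 1) 0 := by
    simp only [besselCoeff, pow_zero, Nat.factorial_zero, add_zero, Nat.factorial_succ]
    push_cast
    field_simp
  simp only [pow_zero, mul_one, ← mul_assoc, h0, sub_self, zero_add]
  congr 1
  funext k
  rw [← besselCoeff_recurrence]
  ring

lemma continuous_besselSeries (n : ℕ) : Continuous (besselSeries n) :=
  continuous_iff_continuousAt.2 fun t => (hasDerivAt_besselSeries n t).continuousAt

lemma besselJ_natCast (n : ℕ) (x : ℝ) : besselJ n x = (x / 2) ^ n * besselSeries n (x ^ 2 / 4) := by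
  rw [besselJ, besselSeries, ← tsum_mul_left]
  congr 1
  funext k
  have hGamma : Real.Gamma (n + k + 1) = (n + k) ! := by
    exact_mod_cast Real.Gamma_nat_eq_factorial (n + k)
  rw [hGamma, show 2 * (k : ℝ) + n = (2 * k + n : ℕ) by push_cast; ring, Real.rpow_natCast,
    pow_add, pow_mul, besselCoeff]
  ring

lemma continuous_besselJ_natCast (n : ℕ) : Continuous (besselJ n) := by
  simp only [funext (besselJ_natCast n)]
  exact ((continuous_id.div_const 2).pow n).mul
    ((continuous_besselSeries n).comp ((continuous_pow 2).div_const 4))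

lemma besselJ_recurrence (n : ℕ) (x : ℝ) :
    x * besselJ (n + 2 : ℕ) x = 2 * (n + 1) * besselJ (n + 1 : ℕ) x - x * besselJ n x := by
  simp only [besselJ_natCast]
  linear_combination (-x * (x / 2) ^ n) * besselSeries_recurrence n (x ^ 2 / 4)

lemma hasDerivAt_besselSeries_sq_div_four (n : ℕ) (x : ℝ) :
    HasDerivAt (fun x : ℝ => besselSeries n (x ^ 2 / 4))
      (-besselSeries (n + 1) (x ^ 2 / 4) * (x / 2)) x :=
  (hasDerivAt_besselSeries n _).comp x
    (((hasDerivAt_pow 2 x).div_const 4).congr_deriv (by push_cast; ring))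

/-- `x J_n'(x)`, see `hasDerivAt_besselJ`. -/
noncomputable def besselFlux (n : ℕ) (x : ℝ) : ℝ := n * besselJ n x - x * besselJ (n + 1 : ℕ) x

lemma hasDerivAt_besselJ (n : ℕ) {x : ℝ} (hx : x ≠ 0) :
    HasDerivAt (besselJ n) (besselFlux n x / x) x := by
  have hpow : HasDerivAt (fun x : ℝ => (x / 2) ^ n) (n * (x / 2) ^ n / x) x := by
    refine ((hasDerivAt_pow n (x / 2)).comp x ((hasDerivAt_id x).div_const 2)).congr_deriv ?_
    rcases Nat.eq_zero_or_pos n with rfl | hn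
    · simp
    · rw [← Nat.sub_add_cancel hn, pow_succ]
      field_simp
      push_cast
      ring
  simp only [funext (besselJ_natCast n)]
  refine (hpow.mul (hasDerivAt_besselSeries_sq_div_four n x)).congr_deriv ?_
  rw [besselFlux, besselJ_natCast, besselJ_natCast]
  field_simp
  ring

lemma hasDerivAt_besselFlux (n : ℕ) {x : ℝ} (hx : x ≠ 0) :
    HasDerivAt (besselFlux n) ((n ^ 2 / x - x) * besselJ n x) x := by
  have h := ((hasDerivAt_besselJ n hx).const_mul (n : ℝ)).sub
    ((hasDerivAt_id x).mul (hasDerivAt_besselJ (n + 1) hx))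
  refine h.congr_deriv ?_
  have hrec := besselJ_recurrence n x
  simp only [besselFlux, id, show n + 1 + 1 = n + 2 from rfl]
  field_simp
  push_cast at hrec ⊢
  linear_combination x * hrec

lemma continuous_besselFlux (n : ℕ) : Continuous (besselFlux n) :=
  (continuous_const.mul (continuous_besselJ_natCast n)).sub
    (continuous_id.mul (continuous_besselJ_natCast (n + 1)))

lemma besselFlux_zero (n : ℕ) : besselFlux n 0 = 0 := by
  rcases Nat.eq_zero_or_pos n with rfl | hn
  · simp [besselFlux]
  · simp [besselFlux, besselJ_natCast, hn.ne']

/-- On `(0, n]` the Bessel equation `(x J')' = (n²/x - x) J` makes the flux `x J'`, which starts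
from `0`, increase wherever `J > 0`. -/
lemma monotoneOn_besselJ {n : ℕ} {x₀ : ℝ} (hx₀ : x₀ ≤ n)
    (hpos : ∀ x ∈ Ioo 0 x₀, 0 < besselJ n x) : MonotoneOn (besselJ n) (Icc 0 x₀) := by
  have hflux : MonotoneOn (besselFlux n) (Icc 0 x₀) := by
    refine monotoneOn_of_hasDerivWithinAt_nonneg (convex_Icc 0 x₀)
      (continuous_besselFlux n).continuousOn
      (fun x hx => (hasDerivAt_besselFlux n
        (by rw [interior_Icc] at hx; exact hx.1.ne')).hasDerivWithinAt)
      (fun x hx => ?_)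
    rw [interior_Icc] at hx
    have hcoeff : x ≤ n ^ 2 / x := by
      rw [le_div_iff₀ hx.1]
      nlinarith [hx.1, hx.2]
    exact mul_nonneg (sub_nonneg.2 hcoeff) (hpos x hx).le
  refine monotoneOn_of_hasDerivWithinAt_nonneg (convex_Icc 0 x₀)
    (continuous_besselJ_natCast n).continuousOn
    (fun x hx => (hasDerivAt_besselJ n
      (by rw [interior_Icc] at hx; exact hx.1.ne')).hasDerivWithinAt)
    (fun x hx => ?_)
  rw [interior_Icc] at hx
  have hx₀0 : 0 ≤ x₀ := hx.1.le.trans hx.2.le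
  have hflux_nonneg := besselFlux_zero n ▸ hflux ⟨le_rfl, hx₀0⟩ ⟨hx.1.le, hx.2.le⟩ hx.1.le
  exact div_nonneg hflux_nonneg hx.1.le

/-- At a first zero `x₀ ≤ n` of `J_n`, `monotoneOn_besselJ` would give
`0 < J_n(x₀/2) ≤ J_n(x₀) ≤ 0`. -/
lemma besselSeries_sq_div_four_pos {n : ℕ} {x : ℝ} (hx : 0 ≤ x) (hxn : x ≤ n) :
    0 < besselSeries n (x ^ 2 / 4) := by
  by_contra! hneg
  set S := {y ∈ Icc (0 : ℝ) n | besselSeries n (y ^ 2 / 4) ≤ 0}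
  have hS : IsClosed S := isClosed_Icc.inter <| isClosed_le
    ((continuous_besselSeries n).comp ((continuous_pow 2).div_const 4)) continuous_const
  have hbdd : BddBelow S := ⟨0, fun y hy => hy.1.1⟩
  obtain ⟨⟨hx₀0, hx₀n⟩, hx₀⟩ : sInf S ∈ S := hS.csInf_mem ⟨x, ⟨hx, hxn⟩, hneg⟩ hbdd
  set x₀ := sInf S
  have hbelow : ∀ y, 0 ≤ y → y < x₀ → 0 < besselSeries n (y ^ 2 / 4) := fun y hy hyx => by
    by_contra! h
    exact (csInf_le hbdd ⟨⟨hy, hyx.le.trans hx₀n⟩, h⟩).not_gt hyx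
  have hx₀pos : 0 < x₀ := by
    refine hx₀0.lt_of_ne fun h => ?_
    rw [← h, zero_pow two_ne_zero, zero_div, besselSeries_zero] at hx₀
    exact hx₀.not_gt (by positivity)
  have hmono := monotoneOn_besselJ hx₀n fun y hy => by
    rw [besselJ_natCast]
    exact mul_pos (pow_pos (half_pos hy.1) n) (hbelow y hy.1.le hy.2)
  have hle := hmono ⟨(half_pos hx₀pos).le, half_le_self hx₀0⟩ ⟨hx₀0, le_rfl⟩
    (half_le_self hx₀0)
  rw [besselJ_natCast, besselJ_natCast] at hle
  have hhalf : 0 < (x₀ / 2 / 2) ^ n * besselSeries n ((x₀ / 2) ^ 2 / 4) :=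
    mul_pos (by positivity) (hbelow _ (half_pos hx₀pos).le (half_lt_self hx₀pos))
  have hend : (x₀ / 2) ^ n * besselSeries n (x₀ ^ 2 / 4) ≤ 0 :=
    mul_nonpos_of_nonneg_of_nonpos (by positivity) hx₀
  linarith

lemma antitoneOn_besselSeries_sq_div_four (n : ℕ) :
    AntitoneOn (fun x => besselSeries n (x ^ 2 / 4)) (Icc 0 n) := by
  refine antitoneOn_of_hasDerivWithinAt_nonpos (convex_Icc (0 : ℝ) n)
    ((continuous_besselSeries n).comp ((continuous_pow 2).div_const 4)).continuousOn
    (fun x _ => (hasDerivAt_besselSeries_sq_div_four n x).hasDerivWithinAt) (fun x hx => ?_)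
  rw [interior_Icc] at hx
  have hpos := besselSeries_sq_div_four_pos (n := n + 1) hx.1.le (by push_cast; linarith [hx.2])
  nlinarith [hx.1]

lemma besselJ_nonneg {n : ℕ} {x : ℝ} (hx : 0 ≤ x) (hxn : x ≤ n) : 0 ≤ besselJ n x := by
  rw [besselJ_natCast]
  exact mul_nonneg (by positivity) (besselSeries_sq_div_four_pos hx hxn).le

lemma pow_div_mul_besselJ_le {n : ℕ} {x y : ℝ} (hy : 0 ≤ y) (hyx : y ≤ x) (hxn : x ≤ n)
    (hx : 0 < x) : (y / x) ^ n * besselJ n x ≤ besselJ n y := by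
  rw [besselJ_natCast, besselJ_natCast, ← mul_assoc, ← mul_pow,
    show y / x * (x / 2) = y / 2 by field_simp]
  exact mul_le_mul_of_nonneg_left (antitoneOn_besselSeries_sq_div_four n ⟨hy, hyx.trans hxn⟩
    ⟨hx.le, hxn⟩ hyx) (by positivity)

lemma one_half_le_one_sub_pow (m : ℕ) : 1 / 2 ≤ (1 - 1 / (4 * m : ℝ)) ^ (2 * m) := by
  rcases Nat.eq_zero_or_pos m with rfl | hm
  · norm_num
  have hm' : (1 : ℝ) ≤ m := by exact_mod_cast hm
  have hle : 1 / (4 * m : ℝ) ≤ 1 := by rw [div_le_one (by positivity)]; linarith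
  calc (1 : ℝ) / 2 = 1 + ((2 * m : ℕ) : ℝ) * -(1 / (4 * m)) := by push_cast; field_simp; ring
    _ ≤ (1 + -(1 / (4 * m))) ^ (2 * m) := one_add_mul_le_pow (by linarith) _
    _ = (1 - 1 / (4 * m : ℝ)) ^ (2 * m) := by rw [← sub_eq_add_neg]

lemma half_mul_sq_besselJ_le {m : ℕ} {τ r : ℝ} (hm : 0 < m) (hτ : 0 < τ) (hτ1 : τ ≤ 1)
    (hr : r ∈ Icc (τ - τ / (4 * m)) τ) : besselJ m (m * τ) ^ 2 / 2 ≤ besselJ m (m * r) ^ 2 := by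
  have hm' : (1 : ℝ) ≤ m := by exact_mod_cast hm
  have hle : 1 / (4 * m : ℝ) ≤ 1 := by rw [div_le_one (by positivity)]; linarith
  have hr0 : 0 ≤ r := by linarith [hr.1, div_le_self hτ.le (by linarith : (1 : ℝ) ≤ 4 * m)]
  have hratio : 1 - 1 / (4 * m : ℝ) ≤ r / τ := by
    rw [le_div_iff₀ hτ]
    linarith [hr.1, show τ / (4 * m) = 1 / (4 * m) * τ by ring]
  have hnτ : (m : ℝ) * τ ≤ m := by nlinarith
  have hJ := pow_div_mul_besselJ_le (x := m * τ) (y := m * r) (by positivity)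
    (by gcongr; exact hr.2) hnτ (by positivity)
  rw [mul_div_mul_left _ _ (by positivity)] at hJ
  have hJτ := besselJ_nonneg (by positivity) hnτ
  calc besselJ m (m * τ) ^ 2 / 2 ≤ (1 - 1 / (4 * m : ℝ)) ^ (2 * m) * besselJ m (m * τ) ^ 2 := by
        nlinarith [one_half_le_one_sub_pow m, sq_nonneg (besselJ m (m * τ))]
    _ ≤ ((r / τ) ^ m * besselJ m (m * τ)) ^ 2 := by
        rw [mul_pow, ← pow_mul, mul_comm m 2]
        gcongr
    _ ≤ besselJ m (m * r) ^ 2 := by gcongr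

lemma sub_mul_le_intervalIntegral {f : ℝ → ℝ} {a b c d : ℝ} (hac : a ≤ c) (hcb : c ≤ b)
    (hf : IntervalIntegrable f volume a b) (hf0 : ∀ x ∈ Ioc a b, 0 ≤ f x)
    (hd : ∀ x ∈ Icc c b, d ≤ f x) : (b - c) * d ≤ ∫ x in a..b, f x :=
  calc (b - c) * d = ∫ _ in c..b, d := by simp
    _ ≤ ∫ x in c..b, f x := intervalIntegral.integral_mono_on hcb intervalIntegrable_const
        (hf.mono_set (uIcc_subset_uIcc (mem_uIcc_of_le hac hcb) right_mem_uIcc)) hd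
    _ ≤ ∫ x in a..b, f x := intervalIntegral.integral_mono_interval hac hcb le_rfl
        ((ae_restrict_mem measurableSet_Ioc).mono hf0) hf

/-- For all `0 < τ₂ < τ₁ < 1` there exist `C > 0` and `M` such that for all `m ≥ M`,
`∫_{τ₂}^{τ₁} J_m(mr)² r dr ≥ (C/m) J_m(mτ₁)²`. -/
theorem stmt10 (τ₁ τ₂ : ℝ) (h2 : 0 < τ₂) (h21 : τ₂ < τ₁) (h1 : τ₁ < 1) :
    ∃ C : ℝ, 0 < C ∧ ∃ M : ℕ, ∀ m : ℕ, M ≤ m →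
      (C / (m:ℝ)) * (besselJ m ((m:ℝ) * τ₁)) ^ 2
        ≤ ∫ r in τ₂..τ₁, (besselJ m ((m:ℝ) * r)) ^ 2 * r := by
  have hτ₁ : 0 < τ₁ := h2.trans h21
  refine ⟨τ₁ * τ₂ / 8, by positivity, ⌈τ₁ / (4 * (τ₁ - τ₂))⌉₊, fun m hm => ?_⟩
  have hceil : τ₁ / (4 * (τ₁ - τ₂)) ≤ m := Nat.ceil_le.1 hm
  have hm : 0 < m := Nat.cast_pos.1 (lt_of_lt_of_le (by have := sub_pos.2 h21; positivity) hceil)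
  set a := τ₁ - τ₁ / (4 * m)
  have ha : τ₂ ≤ a := by
    have : τ₁ / (4 * m) ≤ τ₁ - τ₂ := by
      rw [div_le_iff₀ (by positivity)]
      rw [div_le_iff₀ (by linarith)] at hceil
      linarith
    linarith
  have haτ : a ≤ τ₁ := sub_le_self _ (by positivity)
  have hf : Continuous fun r => besselJ m (m * r) ^ 2 * r :=
    (((continuous_besselJ_natCast m).comp (continuous_const.mul continuous_id)).pow 2).mul
      continuous_id
  have hbound : ∀ r ∈ Icc a τ₁, besselJ m (m * τ₁) ^ 2 / 2 * τ₂ ≤ besselJ m (m * r) ^ 2 * r :=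
    fun r hr => mul_le_mul (half_mul_sq_besselJ_le hm hτ₁ h1.le hr) (ha.trans hr.1) h2.le
      (sq_nonneg _)
  have hnonneg : ∀ r ∈ Ioc τ₂ τ₁, 0 ≤ besselJ m (m * r) ^ 2 * r := fun r hr => by
    have := h2.trans hr.1
    positivity
  calc τ₁ * τ₂ / 8 / m * besselJ m (m * τ₁) ^ 2
      = (τ₁ - a) * (besselJ m (m * τ₁) ^ 2 / 2 * τ₂) := by
        simp only [a]
        field_simp
        ring
    _ ≤ ∫ r in τ₂..τ₁, besselJ m (m * r) ^ 2 * r :=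
        sub_mul_le_intervalIntegral ha haτ (hf.intervalIntegrable _ _) hnonneg hbound
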